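/- Let γ be a nonzero complex number with |Im(γ)| ≤ 1/2 and let z be complex with Im(z) > 1/2. Then the termwise Laplace-transform identity ∫₀^∞ ((e^{−iγt} − 1)/γ²) e^{izt} dt = (i/z²)(1/(z − γ) + 1/γ) holds, and if (γₖ) are such numbers with multiplicities mₖ and Σ mₖ/|γₖ|² < ∞, then ∫₀^∞ (Σ mₖ (e^{−iγₖt} − 1)/γₖ²) e^{izt} dt = (i/z²) Σ mₖ (1/(z − γₖ) + 1/γₖ), with the interchange of sum and integral justified. -/

import Mathlib

open Complex MeasureTheory Set Filter Topology

lemma norm_cexp_mul_ofReal (w : ℂ) (t : ℝ) :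
    ‖Complex.exp (w * t)‖ = Real.exp (w.re * t) := by
  rw [Complex.norm_exp]
  congr 1
  simp [Complex.mul_re]

lemma my_integrableOn_cexp {w : ℂ} (hw : 0 < w.im) :
    IntegrableOn (fun t : ℝ => Complex.exp (I * w * t)) (Ioi 0) := by
  have hcont : Continuous fun t : ℝ => Complex.exp (I * w * t) :=
    Complex.continuous_exp.comp (continuous_const.mul Complex.continuous_ofReal)
  refine (exp_neg_integrableOn_Ioi 0 hw).mono' hcont.aestronglyMeasurable ?_
  filter_upwards with t
  rw [norm_cexp_mul_ofReal]
  simp [neg_mul]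

lemma my_integral_cexp {w : ℂ} (hw : 0 < w.im) :
    ∫ t : ℝ in Ioi 0, Complex.exp (I * w * t) = I / w := by
  have hw0 : w ≠ 0 := fun h => by simp [h] at hw
  have hIw : I * w ≠ 0 := mul_ne_zero I_ne_zero hw0
  have hderiv : ∀ x ∈ Ici (0 : ℝ),
      HasDerivAt (fun t : ℝ => Complex.exp (I * w * t) / (I * w))
        (Complex.exp (I * w * x)) x := by
    intro x _
    have h1 : HasDerivAt (fun s : ℂ => Complex.exp (I * w * s) / (I * w))
        (Complex.exp (I * w * x)) (x : ℂ) := by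
      have h2 := (((hasDerivAt_id (x : ℂ)).const_mul (I * w)).cexp).div_const (I * w)
      simpa [mul_div_cancel_right₀ _ hIw] using h2
    exact h1.comp_ofReal
  have htend : Tendsto (fun t : ℝ => Complex.exp (I * w * t) / (I * w)) atTop (𝓝 0) := by
    rw [tendsto_zero_iff_norm_tendsto_zero]
    have : (fun t : ℝ => ‖Complex.exp (I * w * t) / (I * w)‖)
        = fun t : ℝ => Real.exp (-w.im * t) / ‖I * w‖ := by
      funext t
      rw [norm_div, norm_cexp_mul_ofReal]
      congr 2
      simp [Complex.mul_re]
    rw [this]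
    have h2 : Tendsto (fun t : ℝ => Real.exp (-w.im * t)) atTop (𝓝 0) := by
      apply Real.tendsto_exp_atBot.comp
      exact Tendsto.const_mul_atTop_of_neg (neg_neg_iff_pos.mpr hw) tendsto_id
    simpa using h2.div_const ‖I * w‖
  have := integral_Ioi_of_hasDerivAt_of_tendsto' hderiv (my_integrableOn_cexp hw) htend
  rw [this]
  rw [Complex.ofReal_zero, mul_zero, Complex.exp_zero]
  field_simp
  rw [Complex.I_sq]; ring

lemma single_term (z : ℂ) (hz : 1 / 2 < z.im) (γ : ℂ) (hγ : γ ≠ 0) (him : |γ.im| ≤ 1 / 2) :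
    IntegrableOn
      (fun t : ℝ => ((Complex.exp (-I * γ * t) - 1) / γ ^ 2) * Complex.exp (I * z * t))
      (Ioi (0 : ℝ)) volume ∧
    (∫ t : ℝ in Ioi (0 : ℝ),
        ((Complex.exp (-I * γ * t) - 1) / γ ^ 2) * Complex.exp (I * z * t))
      = (I / z ^ 2) * (1 / (z - γ) + 1 / γ) := by
  have hz0 : 0 < z.im := lt_trans (by norm_num) hz
  have hzγ : 0 < (z - γ).im := by
    have := (abs_le.mp him).2
    simp only [Complex.sub_im]
    linarith
  have hzne : z ≠ 0 := fun h => by simp [h] at hz0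
  have hzγne : z - γ ≠ 0 := fun h => by simp [h] at hzγ
  have hfun : (fun t : ℝ => ((Complex.exp (-I * γ * t) - 1) / γ ^ 2) * Complex.exp (I * z * t))
      = fun t : ℝ => (Complex.exp (I * (z - γ) * t) - Complex.exp (I * z * t)) / γ ^ 2 := by
    funext t
    rw [div_mul_eq_mul_div, sub_mul, one_mul, ← Complex.exp_add]
    congr 2
    ring
  rw [hfun]
  have hint := (my_integrableOn_cexp hzγ).sub (my_integrableOn_cexp hz0)
  constructor
  · exact hint.div_const _
  · rw [integral_div, integral_sub (my_integrableOn_cexp hzγ) (my_integrableOn_cexp hz0),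
      my_integral_cexp hzγ, my_integral_cexp hz0]
    field_simp
    ring

set_option maxHeartbeats 1000000 in
/-- Termwise Laplace-transform identity in the strip and its summed version: for
nonzero `γ` with `|Im γ| ≤ 1/2` and `Im z > 1/2`,
`∫₀^∞ ((e^{-iγt}-1)/γ²) e^{izt} dt = (i/z²)(1/(z-γ) + 1/γ)`; and for a family `γₖ`
of such numbers with multiplicities `mₖ`, `Σ mₖ/|γₖ|² < ∞`, the sum and the integral
may be interchanged. -/
theorem stmt_13 (z : ℂ) (hz : 1 / 2 < z.im) :
    (∀ γ : ℂ, γ ≠ 0 → |γ.im| ≤ 1 / 2 →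
      IntegrableOn
        (fun t : ℝ => ((Complex.exp (-I * γ * t) - 1) / γ ^ 2) * Complex.exp (I * z * t))
        (Ioi (0 : ℝ)) volume ∧
      (∫ t : ℝ in Ioi (0 : ℝ),
          ((Complex.exp (-I * γ * t) - 1) / γ ^ 2) * Complex.exp (I * z * t))
        = (I / z ^ 2) * (1 / (z - γ) + 1 / γ)) ∧
    ∀ (γ : ℕ → ℂ) (m : ℕ → ℕ), (∀ k, γ k ≠ 0) → (∀ k, |(γ k).im| ≤ 1 / 2) →
      (Summable fun k => (m k : ℝ) / ‖γ k‖ ^ 2) →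
      IntegrableOn
        (fun t : ℝ =>
          (∑' k, (m k : ℂ) * (Complex.exp (-I * γ k * t) - 1) / (γ k) ^ 2)
            * Complex.exp (I * z * t))
        (Ioi (0 : ℝ)) volume ∧
      (∫ t : ℝ in Ioi (0 : ℝ),
          (∑' k, (m k : ℂ) * (Complex.exp (-I * γ k * t) - 1) / (γ k) ^ 2)
            * Complex.exp (I * z * t))
        = (I / z ^ 2) * ∑' k, (m k : ℂ) * (1 / (z - γ k) + 1 / γ k) := by
  refine ⟨fun γ hγ him => single_term z hz γ hγ him, ?_⟩
  intro γ m hγ him hsum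
  have hz0 : 0 < z.im := lt_trans (by norm_num) hz
  set a : ℝ := z.im - 1 / 2 with ha_def
  have ha : 0 < a := by simp only [ha_def]; linarith
  set f : ℕ → ℝ → ℂ := fun k t =>
    (m k : ℂ) * (Complex.exp (-I * γ k * t) - 1) / (γ k) ^ 2 * Complex.exp (I * z * t)
    with hf_def
  have hexpz : ∀ t : ℝ, ‖Complex.exp (I * z * t)‖ = Real.exp (-(z.im) * t) := by
    intro t
    rw [norm_cexp_mul_ofReal]
    congr 2
    simp
  have hnorm_exp : ∀ k (t : ℝ),
      ‖Complex.exp (-I * γ k * t) - 1‖ ≤ 2 * Real.exp (|t| / 2) := by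
    intro k t
    have h1 : ‖Complex.exp (-I * γ k * t)‖ = Real.exp ((γ k).im * t) := by
      rw [norm_cexp_mul_ofReal]
      congr 2
      simp
    have h2 : (γ k).im * t ≤ |t| / 2 := by
      calc (γ k).im * t ≤ |(γ k).im * t| := le_abs_self _
        _ = |(γ k).im| * |t| := abs_mul _ _
        _ ≤ (1 / 2) * |t| := by
            apply mul_le_mul_of_nonneg_right (him k) (abs_nonneg t)
        _ = |t| / 2 := by ring
    have h3 : (1 : ℝ) ≤ Real.exp (|t| / 2) := by
      apply Real.one_le_exp
      positivity
    calc ‖Complex.exp (-I * γ k * t) - 1‖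
        ≤ ‖Complex.exp (-I * γ k * t)‖ + ‖(1 : ℂ)‖ := norm_sub_le _ _
      _ = Real.exp ((γ k).im * t) + 1 := by rw [h1]; norm_num
      _ ≤ Real.exp (|t| / 2) + Real.exp (|t| / 2) := by
          have := Real.exp_le_exp.mpr h2
          linarith
      _ = 2 * Real.exp (|t| / 2) := by ring
  have hnormf : ∀ k (t : ℝ), ‖f k t‖
      = (m k : ℝ) * ‖Complex.exp (-I * γ k * t) - 1‖ / ‖γ k‖ ^ 2
        * Real.exp (-(z.im) * t) := by
    intro k t
    rw [hf_def]
    simp only [norm_mul, norm_div, norm_pow, Complex.norm_natCast, hexpz t]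
  have hb : ∀ k, ∀ t : ℝ, 0 ≤ t →
      ‖f k t‖ ≤ 2 * (m k : ℝ) / ‖γ k‖ ^ 2 * Real.exp (-a * t) := by
    intro k t ht
    have hrw : 2 * (m k : ℝ) / ‖γ k‖ ^ 2 * Real.exp (-a * t)
        = (m k : ℝ) * (2 * Real.exp (t / 2)) / ‖γ k‖ ^ 2 * Real.exp (-(z.im) * t) := by
      rw [show -a * t = t / 2 + -(z.im) * t by rw [ha_def]; ring, Real.exp_add]
      ring
    rw [hnormf, hrw]
    gcongr
    have := hnorm_exp k t
    rwa [_root_.abs_of_nonneg ht] at this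
  have hfun_eq : ∀ k, f k = fun t : ℝ =>
      (m k : ℂ) * (((Complex.exp (-I * γ k * t) - 1) / (γ k) ^ 2)
        * Complex.exp (I * z * t)) := by
    intro k
    funext t
    rw [hf_def]
    ring
  have hint : ∀ k, IntegrableOn (f k) (Ioi 0) volume := by
    intro k
    rw [hfun_eq k]
    exact ((single_term z hz (γ k) (hγ k) (him k)).1).const_mul _
  have hintval : ∀ k, (∫ t in Ioi (0 : ℝ), f k t)
      = (m k : ℂ) * ((I / z ^ 2) * (1 / (z - γ k) + 1 / γ k)) := by
    intro k
    rw [hfun_eq k, integral_const_mul, (single_term z hz (γ k) (hγ k) (him k)).2]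
  have hKint : IntegrableOn (fun t : ℝ => Real.exp (-a * t)) (Ioi 0) volume :=
    exp_neg_integrableOn_Ioi 0 ha
  set K : ℝ := ∫ t in Ioi (0 : ℝ), Real.exp (-a * t) with hK_def
  have hnormint : ∀ k, (∫ t in Ioi (0 : ℝ), ‖f k t‖)
      ≤ ((m k : ℝ) / ‖γ k‖ ^ 2) * (2 * K) := by
    intro k
    have h1 : (∫ t in Ioi (0 : ℝ), ‖f k t‖)
        ≤ ∫ t in Ioi (0 : ℝ), 2 * (m k : ℝ) / ‖γ k‖ ^ 2 * Real.exp (-a * t) := by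
      apply setIntegral_mono_on (hint k).norm (hKint.const_mul _) measurableSet_Ioi
      intro t ht
      exact hb k t (le_of_lt ht)
    calc (∫ t in Ioi (0 : ℝ), ‖f k t‖)
        ≤ ∫ t in Ioi (0 : ℝ), 2 * (m k : ℝ) / ‖γ k‖ ^ 2 * Real.exp (-a * t) := h1
      _ = 2 * (m k : ℝ) / ‖γ k‖ ^ 2 * K := by rw [integral_const_mul]
      _ = ((m k : ℝ) / ‖γ k‖ ^ 2) * (2 * K) := by ring
  have hsumnorm : Summable fun k => ∫ t in Ioi (0 : ℝ), ‖f k t‖ :=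
    Summable.of_nonneg_of_le (fun k => integral_nonneg fun t => norm_nonneg _)
      hnormint (hsum.mul_right (2 * K))
  have hswap := MeasureTheory.integral_tsum_of_summable_integral_norm
    (μ := volume.restrict (Ioi (0 : ℝ))) (F := f) (fun k => hint k) hsumnorm
  have hgf : ∀ t : ℝ,
      (∑' k, (m k : ℂ) * (Complex.exp (-I * γ k * t) - 1) / (γ k) ^ 2)
        * Complex.exp (I * z * t) = ∑' k, f k t :=
    fun t => (tsum_mul_right).symm
  have hS_summ : ∀ t : ℝ, Summable fun k =>
      (m k : ℂ) * (Complex.exp (-I * γ k * t) - 1) / (γ k) ^ 2 := by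
    intro t
    apply Summable.of_norm
    refine Summable.of_nonneg_of_le (fun k => norm_nonneg _) (fun k => ?_)
      (hsum.mul_right (2 * Real.exp (|t| / 2)))
    simp only [norm_div, norm_mul, norm_pow, Complex.norm_natCast]
    rw [show (m k : ℝ) / ‖γ k‖ ^ 2 * (2 * Real.exp (|t| / 2))
        = (m k : ℝ) * (2 * Real.exp (|t| / 2)) / ‖γ k‖ ^ 2 by ring]
    gcongr
    exact hnorm_exp k t
  have hSmeas : StronglyMeasurable (fun t : ℝ =>
      ∑' k, (m k : ℂ) * (Complex.exp (-I * γ k * t) - 1) / (γ k) ^ 2) := by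
    apply stronglyMeasurable_of_tendsto (u := atTop)
      (f := fun n (t : ℝ) => ∑ k ∈ Finset.range n,
        (m k : ℂ) * (Complex.exp (-I * γ k * t) - 1) / (γ k) ^ 2)
    · intro n
      apply Continuous.stronglyMeasurable
      apply continuous_finset_sum
      intro k _
      apply Continuous.div_const
      exact continuous_const.mul
        ((Complex.continuous_exp.comp (continuous_const.mul Complex.continuous_ofReal)).sub
          continuous_const)
    · rw [tendsto_pi_nhds]
      intro t
      exact (hS_summ t).hasSum.tendsto_sum_nat
  have hgmeas : AEStronglyMeasurable (fun t : ℝ =>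
      (∑' k, (m k : ℂ) * (Complex.exp (-I * γ k * t) - 1) / (γ k) ^ 2)
        * Complex.exp (I * z * t)) (volume.restrict (Ioi (0 : ℝ))) :=
    (hSmeas.mul
      (Complex.continuous_exp.comp
        (continuous_const.mul Complex.continuous_ofReal)).stronglyMeasurable).aestronglyMeasurable
  set C : ℝ := 2 * ∑' k, (m k : ℝ) / ‖γ k‖ ^ 2 with hC_def
  have hfnorm_summ : ∀ t : ℝ, 0 ≤ t → Summable fun k => ‖f k t‖ := by
    intro t ht
    apply Summable.of_nonneg_of_le (fun k => norm_nonneg _) (fun k => hb k t ht)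
    have hrw : (fun k => 2 * (m k : ℝ) / ‖γ k‖ ^ 2 * Real.exp (-a * t))
        = fun k => ((m k : ℝ) / ‖γ k‖ ^ 2) * (2 * Real.exp (-a * t)) := by
      funext k; ring
    rw [hrw]
    exact hsum.mul_right _
  have hgint : IntegrableOn (fun t : ℝ =>
      (∑' k, (m k : ℂ) * (Complex.exp (-I * γ k * t) - 1) / (γ k) ^ 2)
        * Complex.exp (I * z * t)) (Ioi (0 : ℝ)) volume := by
    apply Integrable.mono' (hKint.const_mul C) hgmeas
    rw [ae_restrict_iff' measurableSet_Ioi]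
    filter_upwards with t ht
    calc ‖(∑' k, (m k : ℂ) * (Complex.exp (-I * γ k * t) - 1) / (γ k) ^ 2)
        * Complex.exp (I * z * t)‖
        = ‖∑' k, f k t‖ := by rw [hgf t]
      _ ≤ ∑' k, ‖f k t‖ := norm_tsum_le_tsum_norm (hfnorm_summ t ht.le)
      _ ≤ ∑' k, 2 * (m k : ℝ) / ‖γ k‖ ^ 2 * Real.exp (-a * t) := by
          apply Summable.tsum_le_tsum (fun k => hb k t ht.le) (hfnorm_summ t ht.le)
          have hrw : (fun k => 2 * (m k : ℝ) / ‖γ k‖ ^ 2 * Real.exp (-a * t))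
              = fun k => ((m k : ℝ) / ‖γ k‖ ^ 2) * (2 * Real.exp (-a * t)) := by
            funext k; ring
          rw [hrw]
          exact hsum.mul_right _
      _ = C * Real.exp (-a * t) := by
          rw [show (fun k => 2 * (m k : ℝ) / ‖γ k‖ ^ 2 * Real.exp (-a * t))
              = fun k => ((m k : ℝ) / ‖γ k‖ ^ 2) * (2 * Real.exp (-a * t)) from by
            funext k; ring]
          rw [tsum_mul_right, hC_def]
          ring
  refine ⟨hgint, ?_⟩
  have hfe : (fun t : ℝ =>
      (∑' k, (m k : ℂ) * (Complex.exp (-I * γ k * t) - 1) / (γ k) ^ 2)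
        * Complex.exp (I * z * t)) = fun t : ℝ => ∑' k, f k t := funext hgf
  rw [hfe, ← hswap]
  calc (∑' k, ∫ t in Ioi (0 : ℝ), f k t)
      = ∑' k, (I / z ^ 2) * ((m k : ℂ) * (1 / (z - γ k) + 1 / γ k)) := by
        apply tsum_congr
        intro k
        rw [hintval k]
        ring
    _ = (I / z ^ 2) * ∑' k, (m k : ℂ) * (1 / (z - γ k) + 1 / γ k) := tsum_mul_left
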